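/- arXiv:1905.03800 — 4 statements merged into one kernel-verified Lean document; each statement's English description precedes it below -/
import Mathlib

section
/- For every real number p with 1 ≤ p < ∞ and every x ∈ bv_p, the series ∑_{k=1}^∞ (x_k − x_{k−1}) b^{(k)} converges to x in the norm of bv_p, and this representation is unique: if ∑_{k=1}^∞ c_k b^{(k)} converges to x in bv_p for complex scalars c_k, then c_k = x_k − x_{k−1} for all k ≥ 1. In other words, (b^{(k)})_{k≥1} is a Schauder basis for bv_p. -/
noncomputable section

open Filter Topology
open scoped ENNReal

/-- The difference operator: sequences indexed from `0`, representing `(x_k)_{k ≥ 1}`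
(so index `n : ℕ` stands for `x_{n+1}`), with the convention `x_0 = 0`. -/
def delta (x : ℕ → ℂ) : ℕ → ℂ := fun n => x n - if n = 0 then 0 else x (n - 1)

/-- The difference operator as a linear equivalence of the space of all sequences,
with inverse given by partial sums. -/
def deltaL : (ℕ → ℂ) ≃ₗ[ℂ] (ℕ → ℂ) where
  toFun := delta
  invFun y := fun n => ∑ i ∈ Finset.range (n + 1), y i
  map_add' x y := by
    funext n
    simp only [delta, Pi.add_apply]
    split <;> ring
  map_smul' c x := by
    funext n
    simp only [delta, Pi.smul_apply, smul_eq_mul, RingHom.id_apply]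
    split <;> ring
  left_inv x := by
    funext n
    induction n with
    | zero => simp [delta]
    | succ k ih =>
      show (∑ i ∈ Finset.range (k + 1 + 1), delta x i) = x (k + 1)
      rw [Finset.sum_range_succ]
      have ih' : (∑ i ∈ Finset.range (k + 1), delta x i) = x k := ih
      rw [ih']
      simp [delta]
  right_inv y := by
    funext n
    show delta (fun n => ∑ i ∈ Finset.range (n + 1), y i) n = y n
    cases n with
    | zero => simp [delta]
    | succ k => simp [delta, Finset.sum_range_succ]

/-- The space `bv_p`, as a submodule of the space of all complex sequences:
`x ∈ bv_p` iff `Δx ∈ ℓ^p`. -/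
def bvSubmodule (p : ℝ≥0∞) : Submodule ℂ (ℕ → ℂ) where
  carrier := {x | Memℓp (delta x) p}
  add_mem' {x y} hx hy := by
    have : delta (x + y) = delta x + delta y := map_add deltaL x y
    simpa [Set.mem_setOf_eq, this] using hx.add hy
  zero_mem' := by
    have : delta (0 : ℕ → ℂ) = 0 := map_zero deltaL
    simp [Set.mem_setOf_eq, this]
    exact zero_memℓp
  smul_mem' c x hx := by
    have : delta (c • x) = c • delta x := map_smul deltaL c x
    simpa [Set.mem_setOf_eq, this] using hx.const_smul c

/-- The space `bv_p` as a type.  (A `def`, not an `abbrev`, so that it does not pick up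
the product topology of the ambient sequence space.) -/
def bv (p : ℝ≥0∞) : Type := ↥(bvSubmodule p)

namespace bv

instance (p : ℝ≥0∞) : AddCommGroup (bv p) :=
  inferInstanceAs (AddCommGroup ↥(bvSubmodule p))

instance (p : ℝ≥0∞) : Module ℂ (bv p) :=
  inferInstanceAs (Module ℂ ↥(bvSubmodule p))

/-- The underlying sequence of an element of `bv_p`. -/
def seq {p : ℝ≥0∞} (x : bv p) : ℕ → ℂ := Subtype.val (x : ↥(bvSubmodule p))

lemma memℓp_delta {p : ℝ≥0∞} (x : bv p) : Memℓp (delta (seq x)) p :=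
  (x : ↥(bvSubmodule p)).2

/-- The difference operator, as a linear map from `bv_p` to `ℓ^p`. -/
def toLp (p : ℝ≥0∞) : bv p →ₗ[ℂ] lp (fun _ : ℕ => ℂ) p where
  toFun x := ⟨delta (seq x), memℓp_delta x⟩
  map_add' x y := by
    ext n
    have : delta (seq x + seq y) = delta (seq x) + delta (seq y) := map_add deltaL _ _
    change delta (seq (x + y)) n = _
    have hseq : seq (x + y) = seq x + seq y := rfl
    rw [hseq, this]
    rfl
  map_smul' c x := by
    ext n
    have : delta (c • seq x) = c • delta (seq x) := map_smul deltaL c _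
    change delta (seq (c • x)) n = _
    have hseq : seq (c • x) = c • seq x := rfl
    rw [hseq, this]
    rfl

lemma toLp_injective (p : ℝ≥0∞) : Function.Injective (toLp p) := by
  intro x y h
  have h' : delta (seq x) = delta (seq y) := by
    have := congrArg (Subtype.val) h
    exact this
  have : seq x = seq y := deltaL.injective h'
  exact Subtype.ext this

noncomputable instance (p : ℝ≥0∞) [Fact (1 ≤ p)] : NormedAddCommGroup (bv p) :=
  NormedAddCommGroup.induced (bv p) (lp (fun _ : ℕ => ℂ) p) (toLp p) (toLp_injective p)

noncomputable instance (p : ℝ≥0∞) [Fact (1 ≤ p)] : NormedSpace ℂ (bv p) :=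
  NormedSpace.induced ℂ (bv p) (lp (fun _ : ℕ => ℂ) p) (toLp p)

end bv

/-- The sequence `b^{(k+1)}`: `1` from position `k` on (positions indexed from `0`). -/
def bSeq (k : ℕ) : ℕ → ℂ := fun n => if k ≤ n then 1 else 0

/-- The sequence `e^{(k+1)}`: `1` exactly at position `k`. -/
def eSeq (k : ℕ) : ℕ → ℂ := fun n => if n = k then 1 else 0

lemma memℓp_eSeq (p : ℝ≥0∞) [Fact (1 ≤ p)] (k : ℕ) : Memℓp (eSeq k) p := by
  rcases eq_or_ne p ∞ with rfl | hp
  · apply memℓp_infty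
    apply Set.Finite.bddAbove
    apply Set.Finite.subset (Set.finite_singleton (0:ℝ) |>.insert 1)
    rintro r ⟨n, rfl⟩
    simp only [eSeq]
    split <;> simp
  · apply memℓp_gen
    apply summable_of_ne_finset_zero (s := {k})
    intro n hn
    simp only [Finset.mem_singleton] at hn
    simp only [eSeq, if_neg hn, norm_zero]
    have hp0 : 0 < p.toReal := by
      have h1 : (1 : ℝ≥0∞) ≤ p := Fact.out
      exact ENNReal.toReal_pos (by intro h; rw [h] at h1; simp at h1) hp
    exact Real.zero_rpow hp0.ne'

lemma delta_bSeq (k : ℕ) : delta (bSeq k) = eSeq k := by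
  funext n
  rcases n with _ | m <;>
    simp only [delta, bSeq, eSeq, Nat.add_sub_cancel, Nat.succ_ne_zero, if_false, reduceIte,
      sub_zero] <;>
    split_ifs <;> first | omega | (exfalso; omega) | (norm_num; done) | tauto

lemma delta_eSeq (k : ℕ) : delta (eSeq k) = eSeq k - eSeq (k + 1) := by
  funext n
  rcases n with _ | m <;>
    simp only [delta, eSeq, Pi.sub_apply, Nat.add_sub_cancel, Nat.succ_ne_zero, if_false,
      reduceIte, sub_zero] <;>
    split_ifs <;> first | omega | (exfalso; omega) | (norm_num; done) | tauto

/-- The element `b^{(k+1)}` of `bv_p`. -/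
def bvB (p : ℝ≥0∞) [Fact (1 ≤ p)] (k : ℕ) : bv p :=
  ⟨bSeq k, show Memℓp (delta (bSeq k)) p by rw [delta_bSeq]; exact memℓp_eSeq p k⟩

/-- The element `e^{(k+1)}` of `bv_p`. -/
def bvE (p : ℝ≥0∞) [Fact (1 ≤ p)] (k : ℕ) : bv p :=
  ⟨eSeq k, show Memℓp (delta (eSeq k)) p by
    rw [delta_eSeq]; exact (memℓp_eSeq p k).sub (memℓp_eSeq p (k + 1))⟩

/-- For `1 ≤ p < ∞`, the sequence `(b^{(k)})_{k≥1}` is a Schauder basis of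
`bv_p`: every `x ∈ bv_p` is the sum, in the `bv_p` norm, of the series
`∑_{k=1}^∞ (x_k - x_{k-1}) b^{(k)}`, and this representation is unique. -/
theorem bvB_schauder_basis (p : ℝ≥0∞) [Fact (1 ≤ p)] (hp : p ≠ ∞) (x : bv p) :
    Filter.Tendsto (fun n => ∑ k ∈ Finset.range n, delta (bv.seq x) k • bvB p k)
      atTop (𝓝 x) ∧
    ∀ c : ℕ → ℂ,
      Filter.Tendsto (fun n => ∑ k ∈ Finset.range n, c k • bvB p k) atTop (𝓝 x) →
      ∀ k, c k = delta (bv.seq x) k := by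
  -- Key: the norm on `bv p` is induced by `toLp p`, so it suffices to work in `lp`.
  have hnorm : ∀ y : bv p, ‖y‖ = ‖bv.toLp p y‖ := fun y => rfl
  have htoLp_bvB : ∀ k, bv.toLp p (bvB p k) = lp.single p k (1 : ℂ) := by
    intro k
    apply lp.ext
    funext n
    show delta (bv.seq (bvB p k)) n = _
    have : bv.seq (bvB p k) = bSeq k := rfl
    rw [this, delta_bSeq]
    rw [lp.single_apply]
    simp [eSeq, Pi.single_apply]
  have key : ∀ c : ℕ → ℂ, ∀ n,
      bv.toLp p (∑ k ∈ Finset.range n, c k • bvB p k)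
        = ∑ k ∈ Finset.range n, lp.single p k (c k) := by
    intro c n
    rw [map_sum]
    refine Finset.sum_congr rfl fun k _ => ?_
    rw [map_smul, htoLp_bvB]
    rw [← lp.single_smul]
    simp
  have htend : ∀ (y : ℕ → bv p) (z : bv p),
      Tendsto (fun n => bv.toLp p (y n)) atTop (𝓝 (bv.toLp p z)) →
      Tendsto y atTop (𝓝 z) := by
    intro y z h
    rw [tendsto_iff_norm_sub_tendsto_zero] at h ⊢
    convert h using 2 with n
    rw [hnorm, map_sub]
  have htend' : ∀ (y : ℕ → bv p) (z : bv p),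
      Tendsto y atTop (𝓝 z) →
      Tendsto (fun n => bv.toLp p (y n)) atTop (𝓝 (bv.toLp p z)) := by
    intro y z h
    rw [tendsto_iff_norm_sub_tendsto_zero] at h ⊢
    convert h using 2 with n
    rw [hnorm, map_sub]
  have hsum := (lp.hasSum_single hp (bv.toLp p x)).tendsto_sum_nat
  constructor
  · apply htend
    have : (fun n => bv.toLp p (∑ k ∈ Finset.range n, delta (bv.seq x) k • bvB p k))
        = fun n => ∑ k ∈ Finset.range n, lp.single p k ((bv.toLp p x) k) := by
      funext n
      rw [key]
      rfl
    rw [this]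
    exact hsum
  · intro c hc k
    have h1 := htend' _ _ hc
    simp only [key] at h1
    -- coordinate evaluation
    have hp0 : p ≠ 0 := by
      have h1p : (1 : ℝ≥0∞) ≤ p := Fact.out
      intro h; rw [h] at h1p; simp at h1p
    have heval : Tendsto (fun n => ((∑ j ∈ Finset.range n, lp.single p j (c j)) : lp (fun _ : ℕ => ℂ) p) k)
        atTop (𝓝 ((bv.toLp p x) k)) := by
      rw [tendsto_iff_norm_sub_tendsto_zero] at h1 ⊢
      refine squeeze_zero (fun n => norm_nonneg _) (fun n => ?_) h1
      have := lp.norm_apply_le_norm hp0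
        ((∑ j ∈ Finset.range n, lp.single p j (c j)) - bv.toLp p x) k
      simpa using this
    have hconst : ∀ n, k < n →
        ((∑ j ∈ Finset.range n, lp.single p j (c j)) : lp (fun _ : ℕ => ℂ) p) k = c k := by
      intro n hn
      rw [lp.coeFn_sum]
      simp only [Finset.sum_apply, lp.single_apply]
      rw [Finset.sum_eq_single k]
      · simp
      · intro j _ hj
        rw [Pi.single_apply, if_neg (Ne.symm hj)]
      · intro h; exact absurd (Finset.mem_range.mpr hn) h
    have : Tendsto (fun n => ((∑ j ∈ Finset.range n, lp.single p j (c j)) : lp (fun _ : ℕ => ℂ) p) k) atTop (𝓝 (c k)) := by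
      apply tendsto_const_nhds.congr'

      filter_upwards [eventually_gt_atTop k] with n hn
      exact (hconst n hn).symm
    exact tendsto_nhds_unique this heval
end
end

section
/- The map φ : bv* → l_∞ defined by φ(f) = (f(b^{(k)}))_{k≥1} is an isometric linear isomorphism; that is, φ is linear, bijective, and satisfies ‖φ(f)‖_∞ = ‖f‖ for every continuous linear functional f on bv. In particular, the continuous dual of bv is isometrically isomorphic to l_∞. -/
/-!
The difference operator `Δ` identifies `bv` isometrically with `ℓ¹` and sends `b^{(k)}` to the
unit vector `e_k`. Hence `φ` is the classical duality `(ℓ¹)' ≅ ℓ^∞`, `f ↦ (f e_k)_k`, transported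
along `Δ`. Its inverse is the pairing `y ↦ (x ↦ ∑ x_k y_k)`, and both are norm-nonincreasing:
`‖f e_k‖ ≤ ‖f‖ ‖e_k‖₁ = ‖f‖` and `|∑ x_k y_k| ≤ ‖x‖₁ ‖y‖_∞`.
-/

noncomputable section

open Filter Topology
open scoped ENNReal

namespace LinearIsometryEquiv

variable {𝕜 E F G : Type*} [NontriviallyNormedField 𝕜] [NormedAddCommGroup E]
  [NormedAddCommGroup F] [NormedAddCommGroup G] [NormedSpace 𝕜 E] [NormedSpace 𝕜 F]
  [NormedSpace 𝕜 G]

def arrowCongrLeft (e : E ≃ₗᵢ[𝕜] F) : (E →L[𝕜] G) ≃ₗᵢ[𝕜] (F →L[𝕜] G) where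
  toLinearEquiv :=
    (e.toContinuousLinearEquiv.arrowCongr (ContinuousLinearEquiv.refl 𝕜 G)).toLinearEquiv
  norm_map' f := f.opNorm_comp_linearIsometryEquiv e.symm

lemma arrowCongrLeft_apply (e : E ≃ₗᵢ[𝕜] F) (f : E →L[𝕜] G) (x : F) :
    e.arrowCongrLeft f x = f (e.symm x) := rfl

end LinearIsometryEquiv

open scoped lp

namespace lp

variable {ι 𝕜 E : Type*} [NontriviallyNormedField 𝕜] [NormedAddCommGroup E] [NormedSpace 𝕜 E]

lemma norm_eq_tsum_norm_of_one (x : ℓ¹(ι, E)) : ‖x‖ = ∑' i, ‖x i‖ := by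
  rw [lp.norm_eq_tsum_rpow (by norm_num)]
  simp

lemma summable_norm_of_one (x : ℓ¹(ι, E)) : Summable fun i => ‖x i‖ := by
  simpa using (lp.memℓp x).summable (by norm_num)

lemma norm_smul_apply_le (x : ℓ¹(ι, 𝕜)) (y : ℓ^∞(ι, E)) (i : ι) :
    ‖x i • y i‖ ≤ ‖x i‖ * ‖y‖ := by
  rw [norm_smul]
  exact mul_le_mul_of_nonneg_left (lp.norm_apply_le_norm ENNReal.top_ne_zero y i) (norm_nonneg _)

lemma summable_norm_smul (x : ℓ¹(ι, 𝕜)) (y : ℓ^∞(ι, E)) :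
    Summable fun i => ‖x i • y i‖ :=
  .of_nonneg_of_le (fun _ => norm_nonneg _) (norm_smul_apply_le x y)
    ((summable_norm_of_one x).mul_right _)

lemma norm_tsum_smul_le (x : ℓ¹(ι, 𝕜)) (y : ℓ^∞(ι, E)) :
    ‖∑' i, x i • y i‖ ≤ ‖x‖ * ‖y‖ :=
  calc ‖∑' i, x i • y i‖ ≤ ∑' i, ‖x i • y i‖ := norm_tsum_le_tsum_norm (summable_norm_smul x y)
    _ ≤ ∑' i, ‖x i‖ * ‖y‖ :=
      (summable_norm_smul x y).tsum_le_tsum (norm_smul_apply_le x y)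
        ((summable_norm_of_one x).mul_right _)
    _ = ‖x‖ * ‖y‖ := by rw [tsum_mul_right, norm_eq_tsum_norm_of_one]

section ValuesAtSingle

variable [DecidableEq ι]

def valuesAtSingle (f : ℓ¹(ι, 𝕜) →L[𝕜] E) : ℓ^∞(ι, E) :=
  ⟨fun i => f (lp.single 1 i 1), memℓp_infty ⟨‖f‖, by
    rintro r ⟨i, rfl⟩
    simpa [lp.norm_single] using f.le_opNorm (lp.single 1 i 1)⟩⟩

lemma valuesAtSingle_apply (f : ℓ¹(ι, 𝕜) →L[𝕜] E) (i : ι) :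
    valuesAtSingle f i = f (lp.single 1 i 1) := rfl

lemma norm_valuesAtSingle_le (f : ℓ¹(ι, 𝕜) →L[𝕜] E) : ‖valuesAtSingle f‖ ≤ ‖f‖ :=
  lp.norm_le_of_forall_le (norm_nonneg f) fun i => by
    simpa [valuesAtSingle_apply, lp.norm_single] using f.le_opNorm (lp.single 1 i 1)

lemma hasSum_smul_valuesAtSingle (f : ℓ¹(ι, 𝕜) →L[𝕜] E) (x : ℓ¹(ι, 𝕜)) :
    HasSum (fun i => x i • valuesAtSingle f i) (f x) := by
  have := f.hasSum (lp.hasSum_single ENNReal.one_ne_top x)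
  simpa [valuesAtSingle_apply, ← map_smul, ← lp.single_smul] using this

end ValuesAtSingle

section PairingOneInfty

variable [CompleteSpace E]

lemma summable_smul (x : ℓ¹(ι, 𝕜)) (y : ℓ^∞(ι, E)) : Summable fun i => x i • y i :=
  .of_norm (summable_norm_smul x y)

def pairingOneInfty (y : ℓ^∞(ι, E)) : ℓ¹(ι, 𝕜) →L[𝕜] E :=
  LinearMap.mkContinuous
    { toFun x := ∑' i, x i • y i
      map_add' x x' := by
        simp only [lp.coeFn_add, Pi.add_apply, add_smul]
        exact (summable_smul x y).tsum_add (summable_smul x' y)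
      map_smul' c x := by
        simp only [lp.coeFn_smul, Pi.smul_apply, smul_assoc, RingHom.id_apply]
        exact (summable_smul x y).tsum_const_smul c }
    ‖y‖ fun x => by simpa [mul_comm] using norm_tsum_smul_le x y

lemma pairingOneInfty_apply (y : ℓ^∞(ι, E)) (x : ℓ¹(ι, 𝕜)) :
    pairingOneInfty y x = ∑' i, x i • y i := rfl

lemma norm_pairingOneInfty_le (y : ℓ^∞(ι, E)) :
    ‖(pairingOneInfty y : ℓ¹(ι, 𝕜) →L[𝕜] E)‖ ≤ ‖y‖ :=
  LinearMap.mkContinuous_norm_le _ (norm_nonneg y) _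

variable [DecidableEq ι]

lemma pairingOneInfty_valuesAtSingle (f : ℓ¹(ι, 𝕜) →L[𝕜] E) :
    pairingOneInfty (valuesAtSingle f) = f :=
  ContinuousLinearMap.ext fun x => (hasSum_smul_valuesAtSingle f x).tsum_eq

lemma valuesAtSingle_pairingOneInfty (y : ℓ^∞(ι, E)) :
    valuesAtSingle (pairingOneInfty y : ℓ¹(ι, 𝕜) →L[𝕜] E) = y := by
  ext i
  rw [valuesAtSingle_apply, pairingOneInfty_apply, tsum_eq_single i fun j hj => by
    rw [lp.single_apply_ne 1 i _ hj, zero_smul], lp.single_apply_self, one_smul]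

def dualOneEquivInfty : (ℓ¹(ι, 𝕜) →L[𝕜] E) ≃ₗᵢ[𝕜] ℓ^∞(ι, E) where
  toFun := valuesAtSingle
  invFun := pairingOneInfty
  map_add' _ _ := rfl
  map_smul' _ _ := rfl
  left_inv := pairingOneInfty_valuesAtSingle
  right_inv := valuesAtSingle_pairingOneInfty
  norm_map' f := (norm_valuesAtSingle_le f).antisymm <| by
    conv_lhs => rw [← pairingOneInfty_valuesAtSingle f]
    exact norm_pairingOneInfty_le _

lemma dualOneEquivInfty_apply (f : ℓ¹(ι, 𝕜) →L[𝕜] E) (i : ι) :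
    dualOneEquivInfty f i = f (lp.single 1 i 1) := rfl

end PairingOneInfty

end lp

lemma delta_deltaL_symm (y : ℕ → ℂ) : delta (deltaL.symm y) = y :=
  deltaL.apply_symm_apply y

namespace bv

lemma toLp_surjective (p : ℝ≥0∞) : Function.Surjective (toLp p) := fun y =>
  ⟨⟨deltaL.symm y, show Memℓp (delta _) p by rw [delta_deltaL_symm]; exact y.2⟩,
    Subtype.ext (delta_deltaL_symm y)⟩

variable (p : ℝ≥0∞) [Fact (1 ≤ p)]

def toLpEquiv : bv p ≃ₗᵢ[ℂ] ℓ^p(ℕ, ℂ) where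
  toLinearEquiv := LinearEquiv.ofBijective (toLp p) ⟨toLp_injective p, toLp_surjective p⟩
  norm_map' _ := rfl

lemma toLpEquiv_bvB (k : ℕ) : toLpEquiv p (bvB p k) = lp.single p k 1 := by
  ext n
  show delta (bSeq k) n = _
  rw [delta_bSeq, lp.single_apply, Pi.single_apply]
  rfl

end bv

/-- The map `φ : bv* → l_∞`, `φ(f) = (f(b^{(k)}))_{k≥1}`, is an isometric
linear isomorphism; in particular `bv*` is isometrically isomorphic to `l_∞`. -/
theorem bv_dual_isometric_linfty :
    ∃ φ : (bv 1 →L[ℂ] ℂ) ≃ₗᵢ[ℂ] lp (fun _ : ℕ => ℂ) ∞,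
      ∀ (f : bv 1 →L[ℂ] ℂ) (k : ℕ), (φ f : ∀ _ : ℕ, ℂ) k = f (bvB 1 k) := by
  refine ⟨(bv.toLpEquiv 1).arrowCongrLeft.trans lp.dualOneEquivInfty, fun f k => ?_⟩
  rw [LinearIsometryEquiv.trans_apply, lp.dualOneEquivInfty_apply,
    LinearIsometryEquiv.arrowCongrLeft_apply, ← bv.toLpEquiv_bvB,
    LinearIsometryEquiv.symm_apply_apply]
end
end

section
/- There exists a continuous linear functional f on bv such that the sequence (f(e^{(k)}))_{k≥1} does not belong to d_∞. Hence the map T : bv* → ω, T(f) = (f(e^{(k)}))_{k≥1}, does not take its values in d_∞, and in particular T is not an isometric isomorphism from bv* onto d_∞. -/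
noncomputable section

open Filter Topology
open scoped ENNReal

/-- The partial sums `∑_{i=k}^n x_i` of the tail series starting at position `k`. -/
def tailPartial (x : ℕ → ℂ) (k : ℕ) : ℕ → ℂ := fun n => ∑ i ∈ Finset.Icc k n, x i

/-- The sum `∑_{i=k}^∞ x_i` of the tail series (a junk value if the series diverges). -/
noncomputable def tailSum (x : ℕ → ℂ) (k : ℕ) : ℂ := limUnder atTop (tailPartial x k)

/-- Membership in the sequence space `d_∞`: every tail series `∑_{i=k}^∞ x_i` converges and
the suprema of the moduli of the tail sums is finite. -/
def memDInfty (x : ℕ → ℂ) : Prop :=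
  ∃ s : ℕ → ℂ, (∀ k, Filter.Tendsto (tailPartial x k) atTop (𝓝 (s k))) ∧
    BddAbove (Set.range fun k => ‖s k‖)

/-- Membership in the sequence space `d_q`: every tail series `∑_{i=k}^∞ x_i` converges and
`∑_k |∑_{i=k}^∞ x_i|^q < ∞`. -/
def memDq (q : ℝ) (x : ℕ → ℂ) : Prop :=
  (∀ k, ∃ s : ℂ, Filter.Tendsto (tailPartial x k) atTop (𝓝 s)) ∧
    Summable fun k => ‖tailSum x k‖ ^ q

/-- The `ℓ^q`-norm of a sequence. -/
noncomputable def lqNorm (q : ℝ) (a : ℕ → ℂ) : ℝ := (∑' k, ‖a k‖ ^ q) ^ (1 / q)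

/-- The `d_q`-norm of a sequence. -/
noncomputable def dqNorm (q : ℝ) (x : ℕ → ℂ) : ℝ := (∑' k, ‖tailSum x k‖ ^ q) ^ (1 / q)

/-- The supremum norm of a sequence. -/
noncomputable def supNorm (a : ℕ → ℂ) : ℝ := ⨆ k, ‖a k‖

/-- The `d_∞`-norm of a sequence. -/
noncomputable def dInftyNorm (x : ℕ → ℂ) : ℝ := ⨆ k, ‖tailSum x k‖

-- Auxiliary construction: the functional `x ↦ ∑' n, (-1)^n * (Δx)_n` on `bv 1`.

lemma bv_summable_delta (x : bv 1) : Summable (fun n => ‖delta (bv.seq x) n‖) := by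
  have h := bv.memℓp_delta x
  have := h.summable (p := 1) (by norm_num)
  simpa using this

lemma bv_summable_cd (x : bv 1) :
    Summable (fun n => ((-1 : ℂ)) ^ n * delta (bv.seq x) n) := by
  apply Summable.of_norm
  have : (fun n => ‖((-1 : ℂ)) ^ n * delta (bv.seq x) n‖)
      = fun n => ‖delta (bv.seq x) n‖ := by
    funext n
    simp
  rw [this]
  exact bv_summable_delta x

lemma bv_norm_eq (x : bv 1) : ‖x‖ = ∑' n, ‖delta (bv.seq x) n‖ := by
  have h : ‖x‖ = ‖bv.toLp 1 x‖ := rfl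
  rw [h, lp.norm_eq_tsum_rpow (by norm_num) _]
  simp only [ENNReal.toReal_one, one_div, inv_one, Real.rpow_one]
  rfl

noncomputable def Fbv : bv 1 →L[ℂ] ℂ :=
  LinearMap.mkContinuous
    { toFun := fun x => ∑' n, ((-1 : ℂ)) ^ n * delta (bv.seq x) n
      map_add' := by
        intro x y
        have hxy : delta (bv.seq (x + y)) = delta (bv.seq x) + delta (bv.seq y) := by
          have : bv.seq (x + y) = bv.seq x + bv.seq y := rfl
          rw [this]; exact map_add deltaL _ _
        simp only [hxy, Pi.add_apply, mul_add]
        exact Summable.tsum_add (bv_summable_cd x) (bv_summable_cd y)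
      map_smul' := by
        intro c x
        have hcx : delta (bv.seq (c • x)) = c • delta (bv.seq x) := by
          have : bv.seq (c • x) = c • bv.seq x := rfl
          rw [this]; exact map_smul deltaL _ _
        simp only [hcx, Pi.smul_apply, smul_eq_mul, RingHom.id_apply]
        rw [← tsum_mul_left]
        congr 1
        funext n
        ring }
    1
    (by
      intro x
      simp only [LinearMap.coe_mk, AddHom.coe_mk, one_mul]
      calc ‖∑' n, ((-1 : ℂ)) ^ n * delta (bv.seq x) n‖
          ≤ ∑' n, ‖((-1 : ℂ)) ^ n * delta (bv.seq x) n‖ := by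
            apply norm_tsum_le_tsum_norm
            have : (fun n => ‖((-1 : ℂ)) ^ n * delta (bv.seq x) n‖)
                = fun n => ‖delta (bv.seq x) n‖ := by funext n; simp
            rw [this]; exact bv_summable_delta x
        _ = ∑' n, ‖delta (bv.seq x) n‖ := by
            congr 1; funext n; simp
        _ = ‖x‖ := (bv_norm_eq x).symm)

lemma Fbv_bvE (k : ℕ) : Fbv (bvE 1 k) = 2 * (-1 : ℂ) ^ k := by
  have hd : delta (bv.seq (bvE 1 k)) = eSeq k - eSeq (k + 1) := by
    have : bv.seq (bvE 1 k) = eSeq k := rfl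
    rw [this, delta_eSeq]
  show (∑' n, ((-1 : ℂ)) ^ n * delta (bv.seq (bvE 1 k)) n) = 2 * (-1 : ℂ) ^ k
  rw [hd]
  have hsum : (∑' n, ((-1 : ℂ)) ^ n * (eSeq k - eSeq (k + 1)) n)
      = ∑ n ∈ ({k, k + 1} : Finset ℕ), ((-1 : ℂ)) ^ n * (eSeq k - eSeq (k + 1)) n := by
    apply tsum_eq_sum
    intro n hn
    simp only [Finset.mem_insert, Finset.mem_singleton, not_or] at hn
    simp [eSeq, hn.1, hn.2]
  rw [hsum, Finset.sum_pair (by omega)]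
  simp only [eSeq, Pi.sub_apply, if_pos, if_neg (show k ≠ k + 1 by omega),
    if_neg (show k + 1 ≠ k by omega), pow_succ]
  ring

lemma tailPartial_Fbv (n : ℕ) :
    tailPartial (fun k => Fbv (bvE 1 k)) 0 n = if Even (n + 1) then 0 else 2 := by
  unfold tailPartial
  have : ∀ i ∈ Finset.Icc 0 n, Fbv (bvE 1 i) = 2 * (-1 : ℂ) ^ i := fun i _ => Fbv_bvE i
  rw [Finset.sum_congr rfl this]
  rw [← Finset.mul_sum]
  have hIcc : Finset.Icc 0 n = Finset.range (n + 1) := by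
    ext i; simp [Nat.lt_succ_iff]
  rw [hIcc, neg_one_geom_sum]
  split <;> simp

theorem Fbv_not_dInfty : ¬ memDInfty (fun k => Fbv (bvE 1 k)) := by
  rintro ⟨s, hs, -⟩
  have h0 := hs 0
  have heven : Filter.Tendsto (fun m : ℕ => tailPartial (fun k => Fbv (bvE 1 k)) 0 (2 * m))
      atTop (𝓝 (s 0)) := h0.comp (Filter.tendsto_atTop_mono (fun m => by simp only [id_eq]; omega) tendsto_id)
  have hodd : Filter.Tendsto (fun m : ℕ => tailPartial (fun k => Fbv (bvE 1 k)) 0 (2 * m + 1))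
      atTop (𝓝 (s 0)) := h0.comp (Filter.tendsto_atTop_mono (fun m => by simp only [id_eq]; omega) tendsto_id)
  have he : ∀ m : ℕ, tailPartial (fun k => Fbv (bvE 1 k)) 0 (2 * m) = 2 := by
    intro m; rw [tailPartial_Fbv]; simp [Nat.even_add_one, parity_simps]
  have ho : ∀ m : ℕ, tailPartial (fun k => Fbv (bvE 1 k)) 0 (2 * m + 1) = 0 := by
    intro m; rw [tailPartial_Fbv]; simp [Nat.even_add_one, parity_simps]
  simp only [he] at heven
  simp only [ho] at hodd
  have h2 : s 0 = 2 := tendsto_nhds_unique heven tendsto_const_nhds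
  have h02 : s 0 = 0 := tendsto_nhds_unique hodd tendsto_const_nhds
  rw [h2] at h02
  norm_num at h02

/-- There is a continuous linear functional `f` on `bv` such that
`(f(e^{(k)}))_{k≥1} ∉ d_∞`; hence the map `T : bv* → ω`, `T f = (f(e^{(k)}))_{k≥1}`, does
not take its values in `d_∞`, and in particular it is not an isometric isomorphism from
`bv*` onto `d_∞`. -/
theorem exists_functional_not_mem_dInfty :
    (∃ f : bv 1 →L[ℂ] ℂ, ¬ memDInfty (fun k => f (bvE 1 k))) ∧
    ¬ ∀ f : bv 1 →L[ℂ] ℂ, memDInfty (fun k => f (bvE 1 k)) := by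
  refine ⟨⟨Fbv, Fbv_not_dInfty⟩, fun h => Fbv_not_dInfty (h Fbv)⟩
end
end

section
/- It is not true that for every continuous linear functional f on bv and every k ≥ 1 the series ∑_{i=k}^∞ f(e^{(i)}) converges with sum f(b^{(k)}); indeed, there exists f ∈ bv* and k ≥ 1 such that the series ∑_{i=k}^∞ f(e^{(i)}) does not converge. -/
noncomputable section

open Filter Topology
open scoped ENNReal

section Aux

noncomputable def signSum (y : lp (fun _ : ℕ => ℂ) 1) : ℂ := ∑' n, (-1 : ℂ) ^ n * y n

lemma signSum_summable (y : lp (fun _ : ℕ => ℂ) 1) :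
    Summable fun n => (-1 : ℂ) ^ n * y n := by
  have h : Summable fun n => ‖y n‖ := by
    have := (lp.memℓp y).summable (by norm_num : 0 < (1 : ℝ≥0∞).toReal)
    simpa using this
  apply Summable.of_norm
  simpa [norm_mul] using h

noncomputable def gFun : lp (fun _ : ℕ => ℂ) 1 →L[ℂ] ℂ := by
  refine LinearMap.mkContinuous
    { toFun := signSum
      map_add' := ?_
      map_smul' := ?_ } 1 ?_
  · intro x y
    simp only [signSum]
    rw [← Summable.tsum_add (signSum_summable x) (signSum_summable y)]
    congr 1; funext n
    simp [lp.coeFn_add, mul_add]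
  · intro c x
    simp only [signSum, RingHom.id_apply, smul_eq_mul]
    rw [← tsum_mul_left]
    congr 1; funext n
    simp [lp.coeFn_smul]
    ring
  · intro y
    have hnorm : ‖y‖ = ∑' n, ‖y n‖ := by
      have := lp.norm_eq_tsum_rpow (by norm_num : (0:ℝ) < (1 : ℝ≥0∞).toReal) y
      simpa using this
    rw [one_mul, hnorm]
    calc ‖signSum y‖ ≤ ∑' n, ‖(-1 : ℂ) ^ n * y n‖ :=
          norm_tsum_le_tsum_norm (by
            have h : Summable fun n => ‖y n‖ := by
              have := (lp.memℓp y).summable (by norm_num : 0 < (1 : ℝ≥0∞).toReal)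
              simpa using this
            simpa [norm_mul] using h)
      _ = ∑' n, ‖y n‖ := by simp [norm_mul]

noncomputable def fBad : bv 1 →L[ℂ] ℂ := by
  refine gFun.comp (LinearMap.mkContinuous (bv.toLp 1) 1 ?_)
  intro x
  rw [one_mul]
  rfl

lemma fBad_eval (i : ℕ) : fBad (bvE 1 i) = 2 * (-1 : ℂ) ^ i := by
  have hcoe : (bv.toLp 1 (bvE 1 i) : ℕ → ℂ) = eSeq i - eSeq (i + 1) := by
    show delta (bv.seq (bvE 1 i)) = _
    exact delta_eSeq i
  show gFun (bv.toLp 1 (bvE 1 i)) = _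
  show signSum (bv.toLp 1 (bvE 1 i)) = _
  unfold signSum
  rw [show (fun n => (-1 : ℂ) ^ n * (bv.toLp 1 (bvE 1 i)) n)
      = fun n => (-1 : ℂ) ^ n * (eSeq i - eSeq (i+1)) n by
    funext n; rw [hcoe]]
  have : (fun n => (-1 : ℂ) ^ n * (eSeq i - eSeq (i+1)) n)
      = fun n => (if n = i then (-1:ℂ)^n else 0) + (if n = i + 1 then -(-1:ℂ)^n else 0) := by
    funext n
    simp only [eSeq, Pi.sub_apply]
    split_ifs with h1 h2 <;> simp_all <;> ring_nf <;> try omega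
  rw [this]
  rw [Summable.tsum_add (summable_of_ne_finset_zero (s := {i}) (by intro n hn; simp at hn; simp [hn]))
      (summable_of_ne_finset_zero (s := {i+1}) (by intro n hn; simp at hn; simp [hn]))]
  rw [tsum_eq_single i (by intro n hn; simp [hn]),
      tsum_eq_single (i+1) (by intro n hn; simp [hn])]
  simp [pow_succ]
  ring

end Aux

/-- It is not true that for every `f ∈ bv*` and every `k ≥ 1` the series
`∑_{i=k}^∞ f(e^{(i)})` converges with sum `f(b^{(k)})`; indeed there are `f ∈ bv*` and
`k ≥ 1` for which this series diverges. -/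
theorem not_tail_sum_eq_bvB :
    (¬ ∀ (f : bv 1 →L[ℂ] ℂ) (k : ℕ),
        Filter.Tendsto (tailPartial (fun i => f (bvE 1 i)) k) atTop (𝓝 (f (bvB 1 k)))) ∧
    ∃ (f : bv 1 →L[ℂ] ℂ) (k : ℕ), ¬ ∃ s : ℂ,
        Filter.Tendsto (tailPartial (fun i => f (bvE 1 i)) k) atTop (𝓝 s) := by
  have key : ¬ ∃ s : ℂ,
      Filter.Tendsto (tailPartial (fun i => fBad (bvE 1 i)) 0) atTop (𝓝 s) := by
    rintro ⟨s, hs⟩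
    have hval : ∀ n, tailPartial (fun i => fBad (bvE 1 i)) 0 n = 1 + (-1 : ℂ) ^ n := by
      intro n
      induction n with
      | zero => simp [tailPartial, fBad_eval]; ring
      | succ m ih =>
        unfold tailPartial at ih ⊢
        rw [show Finset.Icc 0 (m+1) = Finset.range (m+2) by
              ext a; simp [Nat.lt_succ_iff],
            show Finset.Icc 0 m = Finset.range (m+1) by
              ext a; simp [Nat.lt_succ_iff]] at *
        rw [Finset.sum_range_succ, ih, fBad_eval]
        ring
    have hm1 : Filter.Tendsto (fun n : ℕ => 2 * n) atTop atTop :=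
      Filter.tendsto_atTop_atTop.2 fun b => ⟨b, fun a ha => by omega⟩
    have hm2 : Filter.Tendsto (fun n : ℕ => 2 * n + 1) atTop atTop :=
      Filter.tendsto_atTop_atTop.2 fun b => ⟨b, fun a ha => by omega⟩
    have h1 : Filter.Tendsto (fun n : ℕ => tailPartial (fun i => fBad (bvE 1 i)) 0 (2 * n))
        atTop (𝓝 s) := hs.comp hm1
    have h2 : Filter.Tendsto (fun n : ℕ => tailPartial (fun i => fBad (bvE 1 i)) 0 (2 * n + 1))
        atTop (𝓝 s) := hs.comp hm2
    have e1 : (fun n : ℕ => tailPartial (fun i => fBad (bvE 1 i)) 0 (2 * n)) = fun _ => (2 : ℂ) := by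
      funext n; rw [hval]; rw [pow_mul]; norm_num
    have e2 : (fun n : ℕ => tailPartial (fun i => fBad (bvE 1 i)) 0 (2 * n + 1)) = fun _ => (0 : ℂ) := by
      funext n; rw [hval]; rw [pow_succ, pow_mul]; norm_num
    rw [e1] at h1; rw [e2] at h2
    have hs1 : s = 2 := tendsto_nhds_unique h1 tendsto_const_nhds
    have hs2 : s = 0 := tendsto_nhds_unique h2 tendsto_const_nhds
    rw [hs1] at hs2; norm_num at hs2
  constructor
  · intro h
    exact key ⟨_, h fBad 0⟩
  · exact ⟨fBad, 0, key⟩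
end
end
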